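/- Let M, U, V, W : ℝ² → ℝ be smooth functions of (θ, v) satisfying the non-polarized colliding plane wave evolution equations: U_{θv} = U_θ U_v; V_{θv} = ½(U_θ V_v + U_v V_θ) − (V_θ W_v + V_v W_θ) tanh W; W_{θv} = ½(U_θ W_v + U_v W_θ) + V_θ V_v sinh W cosh W; M_{θv} = ½(−U_θ U_v + V_θ V_v cosh² W + W_θ W_v). Define the v-constraint function G = U_{vv} − ½(U_v² + V_v² cosh² W + W_v²) + U_v M_v. Then G satisfies the propagation equation G_θ = U_θ G. -/

import Mathlib

/-!
Differentiate `G` in `θ`. By Clairaut each mixed derivative `X_{vθ}` equals `X_{θv}`, which the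
evolution equations express through first derivatives; `U_{vvθ}` comes from differentiating
`U_{θv} = U_θ U_v` in `v`, giving `U_θ (U_v² + U_{vv})`. After these substitutions (and
`tanh = sinh / cosh`), `G_θ − U_θ G` is a polynomial identity in the remaining quantities.
-/

open Real

/-- Partial derivative with respect to the first variable `θ`. -/
noncomputable def pd1 (F : ℝ → ℝ → ℝ) : ℝ → ℝ → ℝ := fun θ v => deriv (fun t => F t v) θ

/-- Partial derivative with respect to the second variable `v`. -/
noncomputable def pd2 (F : ℝ → ℝ → ℝ) : ℝ → ℝ → ℝ := fun θ v => deriv (fun s => F θ s) v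

open Function

theorem fderiv_fderiv_apply_const {𝕜 E G : Type*} [NontriviallyNormedField 𝕜]
    [NormedAddCommGroup E] [NormedSpace 𝕜 E] [NormedAddCommGroup G] [NormedSpace 𝕜 G]
    {f : E → G} {x : E} (h : DifferentiableAt 𝕜 (fderiv 𝕜 f) x) (u w : E) :
    fderiv 𝕜 (fun p => fderiv 𝕜 f p u) x w = fderiv 𝕜 (fderiv 𝕜 f) x w u := by
  simp [fderiv_clm_apply h (differentiableAt_const u)]

section PartialDerivatives

variable {F : ℝ → ℝ → ℝ} {θ v : ℝ}

theorem pd1_eq_fderiv (h : DifferentiableAt ℝ (uncurry F) (θ, v)) :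
    pd1 F θ v = fderiv ℝ (uncurry F) (θ, v) (1, 0) := by
  show deriv (fun t => F t v) θ = _
  exact (h.hasFDerivAt.comp_hasDerivAt θ ((hasDerivAt_id θ).prodMk (hasDerivAt_const θ v))).deriv

theorem pd2_eq_fderiv (h : DifferentiableAt ℝ (uncurry F) (θ, v)) :
    pd2 F θ v = fderiv ℝ (uncurry F) (θ, v) (0, 1) := by
  show deriv (fun s => F θ s) v = _
  exact (h.hasFDerivAt.comp_hasDerivAt v ((hasDerivAt_const v θ).prodMk (hasDerivAt_id v))).deriv

theorem hasDerivAt_pd1 (h : DifferentiableAt ℝ (uncurry F) (θ, v)) :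
    HasDerivAt (fun t => F t v) (pd1 F θ v) θ :=
  (show DifferentiableAt ℝ (fun t => F t v) θ from
    h.comp (f := fun t => (t, v)) θ
      (differentiableAt_id.prodMk (differentiableAt_const v))).hasDerivAt

theorem hasDerivAt_pd2 (h : DifferentiableAt ℝ (uncurry F) (θ, v)) :
    HasDerivAt (fun s => F θ s) (pd2 F θ v) v :=
  (show DifferentiableAt ℝ (fun s => F θ s) v from
    h.comp v ((differentiableAt_const θ).prodMk differentiableAt_id)).hasDerivAt

theorem uncurry_pd1 (h : Differentiable ℝ (uncurry F)) :
    uncurry (pd1 F) = fun p => fderiv ℝ (uncurry F) p (1, 0) :=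
  funext fun p => pd1_eq_fderiv (h p)

theorem uncurry_pd2 (h : Differentiable ℝ (uncurry F)) :
    uncurry (pd2 F) = fun p => fderiv ℝ (uncurry F) p (0, 1) :=
  funext fun p => pd2_eq_fderiv (h p)

variable {m n : WithTop ℕ∞}

theorem ContDiff.uncurry_pd1 (h : ContDiff ℝ n (uncurry F)) (hmn : m + 1 ≤ n) :
    ContDiff ℝ m (uncurry (pd1 F)) := by
  rw [_root_.uncurry_pd1 (h.differentiable (zero_lt_one.trans_le (le_add_self.trans hmn)).ne')]
  exact (h.fderiv_right hmn).clm_apply contDiff_const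

theorem ContDiff.uncurry_pd2 (h : ContDiff ℝ n (uncurry F)) (hmn : m + 1 ≤ n) :
    ContDiff ℝ m (uncurry (pd2 F)) := by
  rw [_root_.uncurry_pd2 (h.differentiable (zero_lt_one.trans_le (le_add_self.trans hmn)).ne')]
  exact (h.fderiv_right hmn).clm_apply contDiff_const

theorem pd1_pd2_comm (h : ContDiff ℝ 2 (uncurry F)) : pd1 (pd2 F) θ v = pd2 (pd1 F) θ v := by
  have hF : Differentiable ℝ (uncurry F) := h.differentiable (by norm_num)
  have hDF : Differentiable ℝ (fderiv ℝ (uncurry F)) :=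
    (h.fderiv_right (m := 1) (by norm_num)).differentiable one_ne_zero
  rw [pd1_eq_fderiv ((h.uncurry_pd2 (m := 1) (by norm_num)).differentiable one_ne_zero _),
    pd2_eq_fderiv ((h.uncurry_pd1 (m := 1) (by norm_num)).differentiable one_ne_zero _),
    _root_.uncurry_pd1 hF, _root_.uncurry_pd2 hF, fderiv_fderiv_apply_const (hDF _),
    fderiv_fderiv_apply_const (hDF _)]
  exact (h.contDiffAt.isSymmSndFDerivAt (by simp [minSmoothness_of_isRCLikeNormedField])).eq _ _

end PartialDerivatives

section CollidingPlaneWaves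

variable {M U V W : ℝ → ℝ → ℝ} {θ v : ℝ}

noncomputable def vConstraint (M U V W : ℝ → ℝ → ℝ) : ℝ → ℝ → ℝ := fun θ v =>
  pd2 (pd2 U) θ v - (1/2) * ((pd2 U θ v)^2 + (pd2 V θ v)^2 * (cosh (W θ v))^2 + (pd2 W θ v)^2)
    + pd2 U θ v * pd2 M θ v

theorem pd1_vConstraint (hM : ContDiff ℝ 2 (uncurry M)) (hU : ContDiff ℝ 3 (uncurry U))
    (hV : ContDiff ℝ 2 (uncurry V)) (hW : ContDiff ℝ 2 (uncurry W)) :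
    pd1 (vConstraint M U V W) θ v = pd1 (pd2 (pd2 U)) θ v
      - (pd2 U θ v * pd2 (pd1 U) θ v + pd2 V θ v * pd2 (pd1 V) θ v * cosh (W θ v) ^ 2
        + pd2 V θ v ^ 2 * cosh (W θ v) * sinh (W θ v) * pd1 W θ v
        + pd2 W θ v * pd2 (pd1 W) θ v)
      + pd2 (pd1 U) θ v * pd2 M θ v + pd2 U θ v * pd2 (pd1 M) θ v := by
  have hθ {F : ℝ → ℝ → ℝ} (hF : ContDiff ℝ 2 (uncurry F)) :
      HasDerivAt (fun t => pd2 F t v) (pd2 (pd1 F) θ v) θ :=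
    pd1_pd2_comm hF ▸ hasDerivAt_pd1
      ((hF.uncurry_pd2 (m := 1) (by norm_num)).differentiable one_ne_zero _)
  have hUvv := hasDerivAt_pd1 (θ := θ) (v := v)
    (((hU.uncurry_pd2 (m := 2) (by norm_num)).uncurry_pd2 (m := 1) (by norm_num)).differentiable
      one_ne_zero _)
  have hUv := hθ (hU.of_le (by norm_num))
  have hcoshW := (hasDerivAt_pd1 (θ := θ) (v := v) (hW.differentiable two_ne_zero _)).cosh
  have hG := (hUvv.sub ((((hUv.pow 2).add ((hθ hV).pow 2 |>.mul (hcoshW.pow 2))).add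
    ((hθ hW).pow 2)).const_mul (1/2))).add (hUv.mul (hθ hM))
  refine hG.deriv.trans ?_
  simp only [Nat.cast_ofNat, Pi.pow_apply]
  ring

theorem pd1_pd2_pd2_of_pd2_pd1_eq_mul (hU : ContDiff ℝ 3 (uncurry U))
    (e1 : ∀ θ v, pd2 (pd1 U) θ v = pd1 U θ v * pd2 U θ v) :
    pd1 (pd2 (pd2 U)) θ v = pd1 U θ v * (pd2 U θ v ^ 2 + pd2 (pd2 U) θ v) := by
  have hUθ : ContDiff ℝ 1 (uncurry (pd1 U)) := hU.uncurry_pd1 (by norm_num)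
  have hUv : ContDiff ℝ 1 (uncurry (pd2 U)) := hU.uncurry_pd2 (by norm_num)
  have hUθv : pd1 (pd2 U) = pd2 (pd1 U) :=
    funext₂ fun _ _ => pd1_pd2_comm (hU.of_le (by norm_num))
  have hUvθ : pd2 (pd1 U) = fun θ v => pd1 U θ v * pd2 U θ v := funext₂ e1
  calc pd1 (pd2 (pd2 U)) θ v = pd2 (pd1 (pd2 U)) θ v :=
        pd1_pd2_comm (hU.uncurry_pd2 (by norm_num))
    _ = pd2 (fun θ v => pd1 U θ v * pd2 U θ v) θ v := by rw [hUθv, hUvθ]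
    _ = _ := by
      refine ((hasDerivAt_pd2 (hUθ.differentiable one_ne_zero _)).mul
        (hasDerivAt_pd2 (hUv.differentiable one_ne_zero _))).deriv.trans ?_
      rw [e1]
      ring

end CollidingPlaneWaves

/-- For smooth solutions of the non-polarized colliding plane wave evolution equations,
the `v`-constraint function `G = U_{vv} − ½(U_v² + V_v² cosh² W + W_v²) + U_v M_v`
satisfies the propagation equation `G_θ = U_θ G`. -/
theorem nonpolarized_v_constraint_propagation
    (M U V W : ℝ → ℝ → ℝ)
    (hM : ContDiff ℝ (⊤ : ℕ∞) (fun p : ℝ × ℝ => M p.1 p.2))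
    (hU : ContDiff ℝ (⊤ : ℕ∞) (fun p : ℝ × ℝ => U p.1 p.2))
    (hV : ContDiff ℝ (⊤ : ℕ∞) (fun p : ℝ × ℝ => V p.1 p.2))
    (hW : ContDiff ℝ (⊤ : ℕ∞) (fun p : ℝ × ℝ => W p.1 p.2))
    (e1 : ∀ θ v, pd2 (pd1 U) θ v = pd1 U θ v * pd2 U θ v)
    (e2 : ∀ θ v, pd2 (pd1 V) θ v
        = (1/2) * (pd1 U θ v * pd2 V θ v + pd2 U θ v * pd1 V θ v)
          - (pd1 V θ v * pd2 W θ v + pd2 V θ v * pd1 W θ v) * Real.tanh (W θ v))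
    (e3 : ∀ θ v, pd2 (pd1 W) θ v
        = (1/2) * (pd1 U θ v * pd2 W θ v + pd2 U θ v * pd1 W θ v)
          + pd1 V θ v * pd2 V θ v * Real.sinh (W θ v) * Real.cosh (W θ v))
    (e4 : ∀ θ v, pd2 (pd1 M) θ v
        = (1/2) * (-(pd1 U θ v * pd2 U θ v)
            + pd1 V θ v * pd2 V θ v * (Real.cosh (W θ v))^2
            + pd1 W θ v * pd2 W θ v))
    (G : ℝ → ℝ → ℝ)
    (hG : ∀ θ v, G θ v = pd2 (pd2 U) θ v
        - (1/2) * ((pd2 U θ v)^2 + (pd2 V θ v)^2 * (Real.cosh (W θ v))^2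
            + (pd2 W θ v)^2)
        + pd2 U θ v * pd2 M θ v) :
    ∀ θ v, pd1 G θ v = pd1 U θ v * G θ v := by
  have hsmooth {F : ℝ → ℝ → ℝ} {n : ℕ}
      (hF : ContDiff ℝ (⊤ : ℕ∞) (fun p : ℝ × ℝ => F p.1 p.2)) :
      ContDiff ℝ n (uncurry F) :=
    hF.of_le (by exact_mod_cast le_top)
  obtain rfl : G = vConstraint M U V W := funext₂ hG
  intro θ v
  rw [pd1_vConstraint (hsmooth hM) (hsmooth hU) (hsmooth hV) (hsmooth hW),
    pd1_pd2_pd2_of_pd2_pd1_eq_mul (hsmooth hU) e1, e1, e2, e3, e4, vConstraint,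
    tanh_eq_sinh_div_cosh]
  have hcosh := (cosh_pos (W θ v)).ne'
  field_simp
  ring
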